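/- Let (X, M) be a multi-normed vector lattice with the pre-Lebesgue property, and let x_n be a pairwise disjoint sequence of positive elements which is not m-null. Then the sequence of partial sums s_n = Σ_{k=1}^n x_k is um-Cauchy but not um-convergent. -/

import Mathlib

/-!
Truncation by a positive `u` is additive on disjoint positive elements, so
`|s_i - s_j| ⊓ u = |t_i - t_j|` for the partial sums `t_n` of `x_k ⊓ u`; these increase and
are bounded by `u`, hence are m-Cauchy by the pre-Lebesgue property. If `s_n` had a um-limit
`s`, the separating family would force `s_n ≤ s`, so `x_n ≤ s` and
`x_n ≤ |s_{n+1} - s| ⊓ s + |s_n - s| ⊓ s`, making `x_n` m-null.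
-/

open Filter Topology Finset

section LatticeOrderedGroup

variable {X : Type*} [AddCommGroup X] [Lattice X] [AddLeftMono X]

lemma add_inf_le_inf_add_inf {a b u : X} (ha : 0 ≤ a) (hb : 0 ≤ b) (hu : 0 ≤ u) :
    (a + b) ⊓ u ≤ a ⊓ u + b ⊓ u :=
  calc (a + b) ⊓ u ≤ (a ⊓ u + b) ⊓ (a ⊓ u + u) := by
        refine le_inf ?_ (le_add_of_nonneg_of_le (le_inf ha hu) inf_le_right)
        rw [inf_add]
        exact inf_le_inf_left _ (le_add_of_nonneg_right hb)
    _ = a ⊓ u + b ⊓ u := (add_inf b u _).symm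

lemma add_eq_sup_of_inf_eq_zero {a b : X} (hab : a ⊓ b = 0) : a + b = a ⊔ b := by
  rw [← inf_add_sup, hab, zero_add]

lemma add_inf_eq_inf_add_inf_of_inf_eq_zero {a b u : X} (ha : 0 ≤ a) (hb : 0 ≤ b) (hu : 0 ≤ u)
    (hab : a ⊓ b = 0) : (a + b) ⊓ u = a ⊓ u + b ⊓ u := by
  refine le_antisymm (add_inf_le_inf_add_inf ha hb hu) ?_
  have hdisj : (a ⊓ u) ⊓ (b ⊓ u) = 0 :=
    le_antisymm (hab ▸ inf_le_inf inf_le_left inf_le_left) (le_inf (le_inf ha hu) (le_inf hb hu))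
  rw [add_eq_sup_of_inf_eq_zero hdisj]
  exact sup_le (le_inf (inf_le_left.trans (le_add_of_nonneg_right hb)) inf_le_right)
    (le_inf (inf_le_left.trans (le_add_of_nonneg_left ha)) inf_le_right)

lemma sub_le_abs_sub_inf_add_abs_sub_inf {p q c u : X} (hu : 0 ≤ u) (hpq : p - q ≤ u) :
    p - q ≤ |p - c| ⊓ u + |q - c| ⊓ u :=
  calc p - q = (p - q) ⊓ u := (inf_eq_left.2 hpq).symm
    _ ≤ (|p - c| + |q - c|) ⊓ u := by
        refine inf_le_inf_right _ ((le_abs_self _).trans ?_)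
        rw [abs_sub_comm q, ← sub_add_sub_cancel p c q]
        exact abs_add_le _ _
    _ ≤ |p - c| ⊓ u + |q - c| ⊓ u := add_inf_le_inf_add_inf (abs_nonneg _) (abs_nonneg _) hu

section Disjoint

variable {ι : Type*} {x : ι → X}

lemma sum_inf_eq_zero_of_notMem (hx : ∀ i, 0 ≤ x i) (hdisj : Pairwise fun i j => x i ⊓ x j = 0)
    {F : Finset ι} {j : ι} (hj : j ∉ F) : (∑ k ∈ F, x k) ⊓ x j = 0 := by
  classical
  induction F using Finset.induction_on with
  | empty => simpa using hx j
  | insert a F haF ih =>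
    rw [Finset.mem_insert, not_or] at hj
    refine le_antisymm ?_ (le_inf (sum_nonneg fun k _ => hx k) (hx j))
    calc (∑ k ∈ insert a F, x k) ⊓ x j = (x a + ∑ k ∈ F, x k) ⊓ x j := by rw [sum_insert haF]
      _ ≤ x a ⊓ x j + (∑ k ∈ F, x k) ⊓ x j :=
          add_inf_le_inf_add_inf (hx a) (sum_nonneg fun k _ => hx k) (hx j)
      _ = 0 := by rw [hdisj (Ne.symm hj.1), ih hj.2, add_zero]

lemma sum_inf_eq_sum_inf (hx : ∀ i, 0 ≤ x i) (hdisj : Pairwise fun i j => x i ⊓ x j = 0)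
    {u : X} (hu : 0 ≤ u) (F : Finset ι) : (∑ k ∈ F, x k) ⊓ u = ∑ k ∈ F, x k ⊓ u := by
  classical
  induction F using Finset.induction_on with
  | empty => simpa using hu
  | insert a F haF ih =>
    rw [sum_insert haF, sum_insert haF, ← ih]
    exact add_inf_eq_inf_add_inf_of_inf_eq_zero (hx a) (sum_nonneg fun k _ => hx k) hu
      (inf_comm (x a) _ ▸ sum_inf_eq_zero_of_notMem hx hdisj haF)

end Disjoint

section PartialSums

variable {x : ℕ → X}

lemma monotone_sum_range_of_nonneg (hx : ∀ n, 0 ≤ x n) :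
    Monotone fun n => ∑ k ∈ range n, x k :=
  fun _ _ h => sum_le_sum_of_subset_of_nonneg (range_mono h) fun k _ _ => hx k

lemma abs_sum_range_sub_sum_range_inf (hx : ∀ n, 0 ≤ x n)
    (hdisj : Pairwise fun i j => x i ⊓ x j = 0) {u : X} (hu : 0 ≤ u) (i j : ℕ) :
    |∑ k ∈ range i, x k - ∑ k ∈ range j, x k| ⊓ u =
      |∑ k ∈ range i, x k ⊓ u - ∑ k ∈ range j, x k ⊓ u| := by
  wlog hji : j ≤ i generalizing i j
  · rw [abs_sub_comm, this j i (le_of_not_ge hji), abs_sub_comm]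
  rw [← sum_Ico_eq_sub _ hji, ← sum_Ico_eq_sub _ hji, abs_of_nonneg (sum_nonneg fun k _ => hx k),
    abs_of_nonneg (sum_nonneg fun k _ => le_inf (hx k) hu)]
  exact sum_inf_eq_sum_inf hx hdisj hu _

end PartialSums

section MultiNormed

variable {Λ : Type*}

lemma nonneg_of_subadditive_of_abs_mono {f : X → ℝ} (hadd : ∀ x y, f (x + y) ≤ f x + f y)
    (hmono : ∀ x y, |x| ≤ |y| → f x ≤ f y) (z : X) : 0 ≤ f z := by
  have h0 : 0 ≤ f 0 := by simpa using hadd 0 0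
  exact h0.trans (hmono 0 z (by simp))

def UmTendsto (m : Λ → X → ℝ) (s : ℕ → X) (a : X) : Prop :=
  ∀ u : X, 0 ≤ u → ∀ l, Tendsto (fun n => m l (|s n - a| ⊓ u)) atTop (𝓝 0)

def PreLebesgue (m : Λ → X → ℝ) : Prop :=
  ∀ (y : ℕ → X) (b : X), Monotone y → (∀ n, 0 ≤ y n) → (∀ n, y n ≤ b) →
    ∀ l, ∀ ε > (0 : ℝ), ∃ N, ∀ i ≥ N, ∀ j ≥ N, m l (y i - y j) < ε

variable {m : Λ → X → ℝ}

/-- `(s_k - a)⁺` is dominated by `|s_n - a| ⊓ (s_k - a)⁺` for `n ≥ k`, so it is m-null. -/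
lemma le_of_umTendsto_of_monotone (hnonneg : ∀ l z, 0 ≤ m l z)
    (hmono : ∀ l (x y : X), |x| ≤ |y| → m l x ≤ m l y) (hsep : ∀ x : X, (∀ l, m l x = 0) → x = 0)
    {s : ℕ → X} {a : X} (hs : Monotone s) (hlim : UmTendsto m s a) (k : ℕ) : s k ≤ a := by
  set u := (s k - a) ⊔ 0
  have hu : 0 ≤ u := le_sup_right
  have hdom : ∀ n ≥ k, u ≤ |s n - a| ⊓ u := fun n hn =>
    le_inf (sup_le ((sub_le_sub_right (hs hn) a).trans (le_abs_self _)) (abs_nonneg _)) le_rfl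
  have hnull : ∀ l, m l u = 0 := fun l =>
    le_antisymm (ge_of_tendsto (hlim u hu l) (eventually_atTop.2 ⟨k, fun n hn => hmono l _ _ (by
      rw [abs_of_nonneg hu, abs_of_nonneg (le_inf (abs_nonneg _) hu)]; exact hdom n hn)⟩))
      (hnonneg l u)
  rw [← sub_nonpos, ← sup_eq_right]
  exact hsep u hnull

lemma tendsto_sub_of_umTendsto_of_monotone (hnonneg : ∀ l z, 0 ≤ m l z)
    (hadd : ∀ l (x y : X), m l (x + y) ≤ m l x + m l y)
    (hmono : ∀ l (x y : X), |x| ≤ |y| → m l x ≤ m l y) (hsep : ∀ x : X, (∀ l, m l x = 0) → x = 0)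
    {s : ℕ → X} {a : X} (hs : Monotone s) (hlim : UmTendsto m s a) (l : Λ) :
    Tendsto (fun n => m l (s (n + 1) - s n)) atTop (𝓝 0) := by
  have hle : ∀ k, s k ≤ a := le_of_umTendsto_of_monotone hnonneg hmono hsep hs hlim
  have hu : 0 ≤ a - s 0 := sub_nonneg.2 (hle 0)
  have hbound : ∀ n, m l (s (n + 1) - s n) ≤
      m l (|s (n + 1) - a| ⊓ (a - s 0)) + m l (|s n - a| ⊓ (a - s 0)) := by
    intro n
    have hinc : 0 ≤ s (n + 1) - s n := sub_nonneg.2 (hs n.le_succ)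
    refine (hmono l _ _ ?_).trans (hadd l _ _)
    rw [abs_of_nonneg hinc, abs_of_nonneg (add_nonneg (le_inf (abs_nonneg _) hu)
      (le_inf (abs_nonneg _) hu))]
    exact sub_le_abs_sub_inf_add_abs_sub_inf hu (sub_le_sub (hle _) (hs (Nat.zero_le n)))
  have hnull := hlim _ hu l
  have hsum := (hnull.comp (tendsto_add_atTop_nat 1)).add hnull
  rw [add_zero] at hsum
  exact squeeze_zero (fun n => hnonneg l _) hbound hsum

lemma umCauchy_sum_range_of_preLebesgue (hmono : ∀ l (x y : X), |x| ≤ |y| → m l x ≤ m l y)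
    (hpre : PreLebesgue m) {x : ℕ → X} (hx : ∀ n, 0 ≤ x n)
    (hdisj : Pairwise fun i j => x i ⊓ x j = 0) {u : X} (hu : 0 ≤ u) (l : Λ) {ε : ℝ}
    (hε : 0 < ε) : ∃ N, ∀ i ≥ N, ∀ j ≥ N,
      m l (|∑ k ∈ range i, x k - ∑ k ∈ range j, x k| ⊓ u) < ε := by
  have hbdd : ∀ n, ∑ k ∈ range n, x k ⊓ u ≤ u := fun n =>
    sum_inf_eq_sum_inf hx hdisj hu (range n) ▸ inf_le_right
  obtain ⟨N, hN⟩ := hpre _ u (monotone_sum_range_of_nonneg fun k => le_inf (hx k) hu)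
    (fun n => sum_nonneg fun k _ => le_inf (hx k) hu) hbdd l ε hε
  refine ⟨N, fun i hi j hj => ?_⟩
  rw [abs_sum_range_sub_sum_range_inf hx hdisj hu]
  exact (hmono l _ _ (abs_abs _).le).trans_lt (hN i hi j hj)

end MultiNormed

end LatticeOrderedGroup

theorem stmt13_general {X : Type*} [AddCommGroup X] [Lattice X]
    [CovariantClass X X (· + ·) (· ≤ ·)]
    {Λ : Type*} (m : Λ → X → ℝ)
    (hadd : ∀ l (x y : X), m l (x + y) ≤ m l x + m l y)
    (hmono : ∀ l (x y : X), |x| ≤ |y| → m l x ≤ m l y)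
    (hsep : ∀ x : X, (∀ l, m l x = 0) → x = 0)
    -- pre-Lebesgue property
    (hpreLeb : ∀ (y : ℕ → X) (b : X), Monotone y → (∀ n, 0 ≤ y n) → (∀ n, y n ≤ b) →
        ∀ l, ∀ ε > (0:ℝ), ∃ N, ∀ i ≥ N, ∀ j ≥ N, m l (y i - y j) < ε)
    (x : ℕ → X) (hxpos : ∀ n, 0 ≤ x n)
    (hdisj : ∀ i j, i ≠ j → x i ⊓ x j = 0)
    (hnotnull : ¬ ∀ l, Tendsto (fun n => m l (x n)) atTop (𝓝 0)) :
    -- `s n = Σ_{k<n} x k` is um-Cauchy ...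
    (∀ u : X, 0 ≤ u → ∀ l, ∀ ε > (0:ℝ), ∃ N, ∀ i ≥ N, ∀ j ≥ N,
        m l (|(∑ k ∈ Finset.range i, x k) - ∑ k ∈ Finset.range j, x k| ⊓ u) < ε) ∧
    -- ... but not um-convergent
    ¬ ∃ s : X, ∀ u : X, 0 ≤ u → ∀ l,
        Tendsto (fun n => m l (|(∑ k ∈ Finset.range n, x k) - s| ⊓ u)) atTop (𝓝 0) := by
  refine ⟨fun u hu l ε hε => umCauchy_sum_range_of_preLebesgue hmono hpreLeb hxpos hdisj hu l hε,
    fun ⟨s, hlim⟩ => hnotnull fun l => ?_⟩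
  have hnonneg : ∀ l z, 0 ≤ m l z := fun l =>
    nonneg_of_subadditive_of_abs_mono (hadd l) (hmono l)
  simpa only [sum_range_succ_sub_sum] using tendsto_sub_of_umTendsto_of_monotone hnonneg hadd
    hmono hsep (monotone_sum_range_of_nonneg hxpos) hlim l

/-- In an MNVL with the pre-Lebesgue property, if `x_n` is a disjoint
sequence of positive elements that is not m-null, then the sequence of partial sums
`s_n = Σ_{k<n} x_k` is um-Cauchy but not um-convergent. -/
theorem stmt13 {X : Type*} [AddCommGroup X] [Lattice X]
    [CovariantClass X X (· + ·) (· ≤ ·)] [Module ℝ X]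
    {Λ : Type*} (m : Λ → X → ℝ)
    (hadd : ∀ l (x y : X), m l (x + y) ≤ m l x + m l y)
    (hsmul : ∀ l (c : ℝ) (x : X), m l (c • x) = |c| * m l x)
    (hmono : ∀ l (x y : X), |x| ≤ |y| → m l x ≤ m l y)
    (hsep : ∀ x : X, (∀ l, m l x = 0) → x = 0)
    (hdir : ∀ l₁ l₂, ∃ l₃, ∀ x : X, m l₁ x ≤ m l₃ x ∧ m l₂ x ≤ m l₃ x)
    -- pre-Lebesgue property
    (hpreLeb : ∀ (y : ℕ → X) (b : X), Monotone y → (∀ n, 0 ≤ y n) → (∀ n, y n ≤ b) →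
        ∀ l, ∀ ε > (0:ℝ), ∃ N, ∀ i ≥ N, ∀ j ≥ N, m l (y i - y j) < ε)
    (x : ℕ → X) (hxpos : ∀ n, 0 ≤ x n)
    (hdisj : ∀ i j, i ≠ j → x i ⊓ x j = 0)
    (hnotnull : ¬ ∀ l, Tendsto (fun n => m l (x n)) atTop (𝓝 0)) :
    -- `s n = Σ_{k<n} x k` is um-Cauchy ...
    (∀ u : X, 0 ≤ u → ∀ l, ∀ ε > (0:ℝ), ∃ N, ∀ i ≥ N, ∀ j ≥ N,
        m l (|(∑ k ∈ Finset.range i, x k) - ∑ k ∈ Finset.range j, x k| ⊓ u) < ε) ∧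
    -- ... but not um-convergent
    ¬ ∃ s : X, ∀ u : X, 0 ≤ u → ∀ l,
        Tendsto (fun n => m l (|(∑ k ∈ Finset.range n, x k) - s| ⊓ u)) atTop (𝓝 0) :=
  stmt13_general m hadd hmono hsep hpreLeb x hxpos hdisj hnotnull
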